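/- arXiv:0902.0908 — 2 statements merged into one kernel-verified Lean document; each statement's English description precedes it below -/
import Mathlib

section
/- If λ⁺(M) > 1, then the random walk (X_n)_{n≥0} on the directed cover T is transient. -/
open Filter Topology MeasureTheory Set
open scoped ENNReal NNReal Classical

/-- Vertices of the directed cover of the directed graph `(V, E)` rooted at `i₀`:
finite directed paths in `G` starting at `i₀`. -/
def Cover (V : Type) (E : V → V → Prop) (i₀ : V) : Type :=
  {l : List V // List.Chain E i₀ l}

namespace Cover

variable {V : Type} {E : V → V → Prop} {i₀ : V}

instance : MeasurableSpace (Cover V E i₀) := ⊤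

/-- The root of the directed cover: the trivial path. -/
def root : Cover V E i₀ := ⟨[], List.Chain.nil⟩

/-- The label of a cover vertex: the endpoint of the corresponding path in `G`. -/
def lbl (x : Cover V E i₀) : V := x.val.getLastD i₀

/-- The height of a cover vertex: the graph distance in the tree from the root. -/
def ht (x : Cover V E i₀) : ℕ := x.val.length

/-- `y.IsChildOf x` holds iff `y` is a direct descendant (successor) of `x` in the tree. -/
def IsChildOf (y x : Cover V E i₀) : Prop := ∃ j : V, y.val = x.val ++ [j]

end Cover

/-- One-step transition probabilities of the nearest-neighbour random walk on the
directed cover, with forward probabilities `pf` (on labels), backward probabilities `pm`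
and a loop at the root. -/
noncomputable def coverP {V : Type} (E : V → V → Prop) (i₀ : V)
    (pf : V → V → ℝ) (pm : V → ℝ) (x y : Cover V E i₀) : ℝ :=
  if Cover.IsChildOf y x then pf x.lbl y.lbl
  else if x.val = [] ∧ y.val = [] then pm i₀
  else if Cover.IsChildOf x y then pm x.lbl
  else 0

/-- `n`-step transition probabilities of the Markov chain with one-step kernel `p`. -/
noncomputable def kpow {S : Type} (p : S → S → ℝ) : ℕ → S → S → ℝ
  | 0 => fun x y => if x = y then 1 else 0
  | n + 1 => fun x y => ∑' z : S, p x z * kpow p n z y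

/-- Taboo probabilities: `taboo p w n x y` is the probability that the Markov chain with
one-step kernel `p` started at `x` is at `y` at time `n`, avoiding `w` at all times `m < n`. -/
noncomputable def taboo {S : Type} (p : S → S → ℝ) (w : S) : ℕ → S → S → ℝ
  | 0 => fun x y => if x = y then 1 else 0
  | n + 1 => fun x y => if x = w then 0 else ∑' z : S, p x z * taboo p w n z y

/-- The probability that the Markov chain with kernel `p` started at `o` returns to `o`
(the sum over `n` of the probabilities of a first return at time `n + 1`). -/
noncomputable def returnProbA {S : Type} (p : S → S → ℝ) (o : S) : ℝ≥0∞ :=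
  ∑' n : ℕ, ENNReal.ofReal (∑' z : S, p o z * taboo p o n z o)

/-- The upper Collatz–Wielandt number `λ⁺(M)` of a nonnegative matrix `M`. -/
noncomputable def lambdaPlus {V : Type} (M : V → V → ℝ) : ℝ :=
  sSup {lam : ℝ | 0 < lam ∧ ∃ f : V → ℝ, (∀ i, 0 ≤ f i) ∧ f ≠ 0 ∧
    BddAbove (Set.range f) ∧ ∀ i, lam * f i ≤ ∑' j : V, M i j * f j}

/-- The `ℓ∞`-spectral radius `r∞(M) = lim_n ‖Mⁿ‖_∞^(1/n)` of a nonnegative matrix `M`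
(the limit exists; it is expressed via `limsup`). -/
noncomputable def rInfty {V : Type} (M : V → V → ℝ) : ℝ :=
  Filter.limsup (fun n : ℕ => (⨆ i : V, ∑' j : V, kpow M n i j) ^ ((n : ℝ)⁻¹)) Filter.atTop

/-- `(Ω, P, X)` is a realization of the nearest-neighbour random walk on the directed cover
started at the root: the finite-dimensional distributions are the Markovian ones given by the
kernel `coverP E i₀ pf pm` and starting point `Cover.root`. -/
def IsCoverWalk {V : Type} (E : V → V → Prop) (i₀ : V) (pf : V → V → ℝ) (pm : V → ℝ)
    {Ω : Type} [MeasurableSpace Ω] (P : Measure Ω) (X : ℕ → Ω → Cover V E i₀) : Prop :=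
  (∀ n, Measurable (X n)) ∧
  ∀ (n : ℕ) (path : ℕ → Cover V E i₀),
    P {ω | ∀ k ≤ n, X k ω = path k} =
      (if path 0 = Cover.root then 1 else 0) *
        ∏ k ∈ Finset.range n, ENNReal.ofReal (coverP E i₀ pf pm (path k) (path (k + 1)))

/-- The length of a path (given by its list of labels, with previous vertex `prev`)
with respect to the weight function `w` on the edges of `G`. -/
noncomputable def pathLen {V : Type} (w : V → V → ℝ) : V → List V → ℝ
  | _, [] => 0
  | prev, j :: rest => w prev j + pathLen w j rest

/-!
From `λ⁺(M) > 1` we get `λ > 1` and a bounded `f ≥ 0`, `f ≠ 0`, with `M f ≥ λ f`; iterating `M`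
along a path from `i₀` into the support of `f` gives such an `f` with `f i₀ > 0` (the bound
`p(-i) > ε` keeps the iterates bounded). For small `c > 0` the label weights `G = 1 - c f` lie in
`[λ⁻¹, 1]` and satisfy `p(-i) + (∑ⱼ p(i,j) G j) G i ≤ G i` for all `i`, as well as
`p(-i₀) + ∑ⱼ p(i₀,j) G j < 1`. The product of `G` over the labels of a path is then a function `h`
on the cover with `h o = 1` that is superharmonic away from `o`, and the usual hitting-time
argument bounds the return probability by `∑_y p(o,y) h y < 1`.
-/

open Function

section Subinvariant

variable {V : Type} {M : V → V → ℝ}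

noncomputable def tsumMulVec (M : V → V → ℝ) (g : V → ℝ) (i : V) : ℝ := ∑' j, M i j * g j

theorem summable_mul_of_finite_support (hfin : ∀ i, (support (M i)).Finite) (g : V → ℝ) (i : V) :
    Summable fun j => M i j * g j :=
  summable_of_hasFiniteSupport ((hfin i).subset (support_mul_subset_left _ _))

theorem tsumMulVec_nonneg (hM0 : ∀ i j, 0 ≤ M i j) {g : V → ℝ} (hg : 0 ≤ g) :
    0 ≤ tsumMulVec M g :=
  fun i => tsum_nonneg fun j => mul_nonneg (hM0 i j) (hg j)

theorem tsumMulVec_mono (hM0 : ∀ i j, 0 ≤ M i j) (hfin : ∀ i, (support (M i)).Finite)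
    {g g' : V → ℝ} (h : g ≤ g') : tsumMulVec M g ≤ tsumMulVec M g' :=
  fun i => Summable.tsum_le_tsum (fun j => mul_le_mul_of_nonneg_left (h j) (hM0 i j))
    (summable_mul_of_finite_support hfin g i) (summable_mul_of_finite_support hfin g' i)

theorem tsumMulVec_le (hM0 : ∀ i j, 0 ≤ M i j) (hfin : ∀ i, (support (M i)).Finite) {C B : ℝ}
    (hrow : ∀ i, ∑' j, M i j ≤ C) (hB : 0 ≤ B) {g : V → ℝ} (hg : ∀ j, g j ≤ B) (i : V) :
    tsumMulVec M g i ≤ C * B :=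
  calc tsumMulVec M g i ≤ tsumMulVec M (fun _ => B) i := tsumMulVec_mono hM0 hfin hg i
    _ = (∑' j, M i j) * B := tsum_mul_right
    _ ≤ C * B := mul_le_mul_of_nonneg_right (hrow i) hB

theorem tsumMulVec_pos (hM0 : ∀ i j, 0 ≤ M i j) (hfin : ∀ i, (support (M i)).Finite)
    {g : V → ℝ} (hg : 0 ≤ g) {i j : V} (hM : 0 < M i j) (hgj : 0 < g j) :
    0 < tsumMulVec M g i :=
  (mul_pos hM hgj).trans_le <| (summable_mul_of_finite_support hfin g i).le_tsum j
    fun k _ => mul_nonneg (hM0 i k) (hg k)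

theorem mul_le_tsumMulVec_iterate (hM0 : ∀ i j, 0 ≤ M i j) (hfin : ∀ i, (support (M i)).Finite)
    {lam : ℝ} {f : V → ℝ} (hf : ∀ i, lam * f i ≤ tsumMulVec M f i) (n : ℕ) (i : V) :
    lam * (tsumMulVec M)^[n] f i ≤ tsumMulVec M ((tsumMulVec M)^[n] f) i := by
  induction n generalizing i with
  | zero => exact hf i
  | succ n ih =>
    rw [iterate_succ_apply']
    calc lam * tsumMulVec M ((tsumMulVec M)^[n] f) i
        = tsumMulVec M (fun j => lam * (tsumMulVec M)^[n] f j) i := by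
          rw [tsumMulVec, tsumMulVec, ← tsum_mul_left]
          exact tsum_congr fun j => mul_left_comm _ _ _
      _ ≤ _ := tsumMulVec_mono hM0 hfin ih i

theorem iterate_tsumMulVec_nonneg (hM0 : ∀ i j, 0 ≤ M i j) {f : V → ℝ} (hf : 0 ≤ f) (n : ℕ) :
    0 ≤ (tsumMulVec M)^[n] f := by
  induction n with
  | zero => exact hf
  | succ n ih => rw [iterate_succ_apply']; exact tsumMulVec_nonneg hM0 ih

theorem bddAbove_iterate_tsumMulVec (hM0 : ∀ i j, 0 ≤ M i j) (hfin : ∀ i, (support (M i)).Finite)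
    {C : ℝ} (hrow : ∀ i, ∑' j, M i j ≤ C) {f : V → ℝ} (hf : BddAbove (range f)) (n : ℕ) :
    BddAbove (range ((tsumMulVec M)^[n] f)) := by
  induction n with
  | zero => exact hf
  | succ n ih =>
    obtain ⟨B, hB⟩ := ih
    rw [iterate_succ_apply']
    exact ⟨C * max B 0, forall_mem_range.2 <| tsumMulVec_le hM0 hfin hrow (le_max_right _ _)
      fun j => (hB (mem_range_self j)).trans (le_max_left _ _)⟩

theorem exists_iterate_tsumMulVec_pos (hM0 : ∀ i j, 0 ≤ M i j)
    (hfin : ∀ i, (support (M i)).Finite) {f : V → ℝ} (hf0 : 0 ≤ f) {i j : V}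
    (hij : Relation.ReflTransGen (fun a b => 0 < M a b) i j) (hj : 0 < f j) :
    ∃ n, 0 < (tsumMulVec M)^[n] f i := by
  induction hij using Relation.ReflTransGen.head_induction_on with
  | refl => exact ⟨0, hj⟩
  | head hab _ ih =>
    obtain ⟨n, hn⟩ := ih
    refine ⟨n + 1, ?_⟩
    rw [iterate_succ_apply']
    exact tsumMulVec_pos hM0 hfin (iterate_tsumMulVec_nonneg hM0 hf0 n) hab hn

theorem exists_subinvariant_of_one_lt_lambdaPlus (h : 1 < lambdaPlus M) :
    ∃ lam, 1 < lam ∧ ∃ f : V → ℝ, 0 ≤ f ∧ f ≠ 0 ∧ BddAbove (range f) ∧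
      ∀ i, lam * f i ≤ tsumMulVec M f i := by
  rw [lambdaPlus] at h
  refine (exists_lt_of_lt_csSup (nonempty_iff_ne_empty.2 fun hs => ?_) h).imp
    fun lam ⟨⟨_, hf⟩, hlam⟩ => ⟨hlam, hf⟩
  rw [hs, Real.sSup_empty] at h
  linarith

theorem exists_subinvariant_pos_at (hM0 : ∀ i j, 0 ≤ M i j) (hfin : ∀ i, (support (M i)).Finite)
    {C : ℝ} (hrow : ∀ i, ∑' j, M i j ≤ C) {i₀ : V}
    (hconn : ∀ j, Relation.ReflTransGen (fun a b => 0 < M a b) i₀ j) {lam : ℝ} {f : V → ℝ}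
    (hf0 : 0 ≤ f) (hf : f ≠ 0) (hfb : BddAbove (range f))
    (hlam : ∀ i, lam * f i ≤ tsumMulVec M f i) :
    ∃ g : V → ℝ, 0 ≤ g ∧ BddAbove (range g) ∧ (∀ i, lam * g i ≤ tsumMulVec M g i) ∧ 0 < g i₀ := by
  obtain ⟨j, hj⟩ : ∃ j, 0 < f j := by
    obtain ⟨j, hj⟩ := Function.ne_iff.1 hf
    exact ⟨j, (hf0 j).lt_of_ne' hj⟩
  obtain ⟨n, hn⟩ := exists_iterate_tsumMulVec_pos hM0 hfin hf0 (hconn j) hj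
  exact ⟨_, iterate_tsumMulVec_nonneg hM0 hf0 n, bddAbove_iterate_tsumMulVec hM0 hfin hrow hfb n,
    mul_le_tsumMulVec_iterate hM0 hfin hlam n, hn⟩

end Subinvariant

section EscapeWeight

variable {V : Type} {pf : V → V → ℝ} {pm : V → ℝ}

theorem exists_escapeWeight (hpm : ∀ i, 0 < pm i) (hfin : ∀ i, (support (pf i)).Finite)
    (hpfsum : ∀ i, ∑' j, pf i j = 1 - pm i) {lam : ℝ} (hlam : 1 < lam) {g : V → ℝ}
    (hg0 : 0 ≤ g) (hgb : BddAbove (range g)) (hg : ∀ i, pm i * (lam * g i) ≤ ∑' j, pf i j * g j)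
    {i₀ : V} (hgi₀ : 0 < g i₀) :
    ∃ G : V → ℝ, 0 ≤ G ∧ (∀ i, pm i + (∑' j, pf i j * G j) * G i ≤ G i) ∧
      pm i₀ + ∑' j, pf i₀ j * G j < 1 := by
  obtain ⟨B, hB⟩ := hgb
  have hlam_inv : lam⁻¹ < 1 := inv_lt_one_of_one_lt₀ hlam
  -- `c g ≤ 1 - λ⁻¹`, so `G = 1 - c g ≥ λ⁻¹`: this turns `λ g ≤ M g` into the inequality for `G`.
  set c := (1 - lam⁻¹) / max B 1
  have hc : 0 < c := div_pos (by linarith) (by positivity)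
  have hcg : ∀ i, c * g i ≤ 1 - lam⁻¹ := fun i => by
    calc c * g i ≤ c * max B 1 :=
          mul_le_mul_of_nonneg_left ((hB (mem_range_self i)).trans (le_max_left _ _)) hc.le
      _ = 1 - lam⁻¹ := div_mul_cancel₀ _ (by positivity)
  have hsum : ∀ i, ∑' j, pf i j * (1 - c * g j) = 1 - pm i - c * ∑' j, pf i j * g j := fun i => by
    calc ∑' j, pf i j * (1 - c * g j) = ∑' j, (pf i j - c * (pf i j * g j)) :=
          tsum_congr fun j => by ring
      _ = _ := by
        rw [Summable.tsum_sub (summable_of_hasFiniteSupport (hfin i))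
          ((summable_mul_of_finite_support hfin g i).mul_left c), tsum_mul_left, hpfsum]
  refine ⟨fun i => 1 - c * g i, fun i => ?_, fun i => ?_, ?_⟩
  · show 0 ≤ 1 - c * g i
    linarith [hcg i, inv_pos.2 (zero_lt_one.trans hlam)]
  · set S := ∑' j, pf i j * g j
    have hS : 0 ≤ S := (mul_nonneg (hpm i).le (mul_nonneg (by linarith) (hg0 i))).trans (hg i)
    have h1 : c * (pm i * g i) ≤ c * S * lam⁻¹ :=
      calc c * (pm i * g i) = c * (pm i * (lam * g i)) * lam⁻¹ := by field_simp
        _ ≤ c * S * lam⁻¹ := by gcongr; exact hg i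
    have h2 : c * S * lam⁻¹ ≤ c * S * (1 - c * g i) := by gcongr; linarith [hcg i]
    show pm i + (∑' j, pf i j * (1 - c * g j)) * (1 - c * g i) ≤ 1 - c * g i
    rw [hsum]
    nlinarith
  · show pm i₀ + ∑' j, pf i₀ j * (1 - c * g j) < 1
    rw [hsum]
    have := mul_pos hc ((mul_pos (hpm i₀) (mul_pos (by linarith) hgi₀)).trans_le (hg i₀))
    linarith

end EscapeWeight

section MarkovChain

variable {S : Type} (q : S → S → ℝ≥0∞)

noncomputable def pathWeight : S → List S → ℝ≥0∞
  | _, [] => 1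
  | x, y :: l => q x y * pathWeight y l

noncomputable def pathMass (m : ℕ) (s : List S → Prop) (x : S) : ℝ≥0∞ :=
  ∑' l : List S, if l.length = m ∧ s l then pathWeight q x l else 0

def IsMarkovChainFrom {Ω : Type} [MeasurableSpace Ω] (P : Measure Ω) (X : ℕ → Ω → S) (o : S) :
    Prop :=
  ∀ (n : ℕ) (path : ℕ → S), P {ω | ∀ k ≤ n, X k ω = path k} =
    (if path 0 = o then 1 else 0) * ∏ k ∈ Finset.range n, q (path k) (path (k + 1))

theorem pathMass_zero (s : List S → Prop) (x : S) :
    pathMass q 0 s x = if s [] then 1 else 0 := by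
  rw [pathMass, tsum_eq_single []]
  · simp [pathWeight]
  · intro l hl
    simp [List.length_eq_zero_iff, hl]

theorem pathMass_succ (m : ℕ) (s : List S → Prop) (x : S) :
    pathMass q (m + 1) s x = ∑' y, q x y * pathMass q m (fun l => s (y :: l)) y := by
  have hcons : Injective fun p : S × List S => p.1 :: p.2 := fun p p' h => by
    simpa [Prod.ext_iff] using h
  rw [pathMass, ← hcons.tsum_eq, ENNReal.tsum_prod']
  · refine tsum_congr fun y => ?_
    rw [pathMass, ← ENNReal.tsum_mul_left]
    refine tsum_congr fun l => ?_
    simp only [List.length_cons, Nat.add_right_cancel_iff, pathWeight]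
    split_ifs <;> simp
  · rintro (_ | ⟨y, l⟩) h
    · simp at h
    · exact ⟨(y, l), rfl⟩

variable {q}

theorem pathMass_le_one (hq : ∀ x, ∑' y, q x y ≤ 1) (m : ℕ) (s : List S → Prop) (x : S) :
    pathMass q m s x ≤ 1 := by
  induction m generalizing s x with
  | zero => rw [pathMass_zero]; split_ifs <;> simp
  | succ m ih =>
    rw [pathMass_succ]
    calc ∑' y, q x y * pathMass q m (fun l => s (y :: l)) y ≤ ∑' y, q x y :=
          ENNReal.tsum_le_tsum fun y => mul_le_of_le_one_right' (ih _ y)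
      _ ≤ 1 := hq x

variable {o : S} {h : S → ℝ≥0∞}

theorem pathMass_visit_le (hq : ∀ x, ∑' y, q x y ≤ 1)
    (hh : ∀ x ≠ o, ∑' y, q x y * h y ≤ h x) (ho : 1 ≤ h o) (m : ℕ) (x : S) :
    pathMass q m (fun l => o ∈ x :: l) x ≤ h x := by
  rcases eq_or_ne x o with rfl | hx
  · exact (pathMass_le_one hq m _ x).trans ho
  induction m generalizing x with
  | zero => simp [pathMass_zero, hx.symm]
  | succ m ih =>
    rw [pathMass_succ]
    refine (ENNReal.tsum_le_tsum fun y => mul_le_mul_right ?_ (q x y)).trans (hh x hx)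
    rcases eq_or_ne y o with rfl | hy
    · exact (pathMass_le_one hq m _ y).trans ho
    · simpa [hx.symm] using ih y hy

theorem pathMass_return_le (hq : ∀ x, ∑' y, q x y ≤ 1)
    (hh : ∀ x ≠ o, ∑' y, q x y * h y ≤ h x) (ho : 1 ≤ h o) (m : ℕ) :
    pathMass q m (fun l => o ∈ l) o ≤ ∑' y, q o y * h y := by
  cases m with
  | zero => simp [pathMass_zero]
  | succ m =>
    rw [pathMass_succ]
    exact ENNReal.tsum_le_tsum fun y => mul_le_mul_right (pathMass_visit_le hq hh ho m y) _

theorem prod_range_getD_eq_pathWeight (x d : S) (l : List S) :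
    ∏ k ∈ Finset.range l.length, q ((x :: l).getD k d) ((x :: l).getD (k + 1) d) =
      pathWeight q x l := by
  induction l generalizing x with
  | nil => simp [pathWeight]
  | cons y l ih =>
    rw [List.length_cons, Finset.prod_range_succ', pathWeight, ← ih y, mul_comm]
    simp

variable [Countable S] {Ω : Type} [MeasurableSpace Ω] {P : Measure Ω} {X : ℕ → Ω → S}

theorem measure_visit_le_pathMass (hX : IsMarkovChainFrom q P X o) (N : ℕ) :
    P {ω | ∃ n, 1 ≤ n ∧ n ≤ N ∧ X n ω = o} ≤ pathMass q N (fun l => o ∈ l) o := by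
  set A : S → List S → Set Ω := fun x l =>
    {ω | l.length = N ∧ o ∈ l ∧ ∀ k ≤ N, X k ω = (x :: l).getD k x}
  have hcover : {ω | ∃ n, 1 ≤ n ∧ n ≤ N ∧ X n ω = o} ⊆ ⋃ x, ⋃ l, A x l := by
    rintro ω ⟨n, hn1, hnN, hXn⟩
    refine mem_iUnion₂.2 ⟨X 0 ω, (List.range N).map fun k => X (k + 1) ω, by simp, ?_, ?_⟩
    · simp only [List.mem_map, List.mem_range]
      exact ⟨n - 1, by omega, by rwa [Nat.sub_add_cancel hn1]⟩
    · rintro (_ | k) hk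
      · rfl
      · simp [List.getD_eq_getElem?_getD, hk]
  have hA : ∀ x l, P (A x l) ≤
      (if x = o then 1 else 0) * (if l.length = N ∧ o ∈ l then pathWeight q x l else 0) := by
    intro x l
    by_cases hl : l.length = N ∧ o ∈ l
    · rw [if_pos hl]
      calc P (A x l) ≤ P {ω | ∀ k ≤ l.length, X k ω = (x :: l).getD k x} :=
            measure_mono fun ω hω => hl.1 ▸ hω.2.2
        _ = _ := by rw [hX, List.getD_cons_zero, prod_range_getD_eq_pathWeight]
    · have hempty : A x l = ∅ := eq_empty_of_forall_notMem fun ω hω => hl ⟨hω.1, hω.2.1⟩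
      simp [hempty]
  calc P {ω | ∃ n, 1 ≤ n ∧ n ≤ N ∧ X n ω = o}
      ≤ ∑' x, ∑' l, P (A x l) :=
        (measure_mono hcover).trans <|
          (measure_iUnion_le _).trans (ENNReal.tsum_le_tsum fun x => measure_iUnion_le _)
    _ ≤ ∑' x, (if x = o then 1 else 0) * pathMass q N (fun l => o ∈ l) x :=
        ENNReal.tsum_le_tsum fun x =>
          (ENNReal.tsum_le_tsum (hA x)).trans_eq (by rw [ENNReal.tsum_mul_left, pathMass]; congr!)
    _ = pathMass q N (fun l => o ∈ l) o := by simp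

theorem measure_exists_return_le (hX : IsMarkovChainFrom q P X o) (hq : ∀ x, ∑' y, q x y ≤ 1)
    (hh : ∀ x ≠ o, ∑' y, q x y * h y ≤ h x) (ho : 1 ≤ h o) :
    P {ω | ∃ n, 1 ≤ n ∧ X n ω = o} ≤ ∑' y, q o y * h y := by
  have hunion : {ω | ∃ n, 1 ≤ n ∧ X n ω = o} = ⋃ N, {ω | ∃ n, 1 ≤ n ∧ n ≤ N ∧ X n ω = o} := by
    ext ω
    simp only [mem_iUnion]
    exact ⟨fun ⟨n, h1, h2⟩ => ⟨n, n, h1, le_rfl, h2⟩, fun ⟨_, n, h1, _, h2⟩ => ⟨n, h1, h2⟩⟩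
  have hmono : Monotone fun N => {ω | ∃ n, 1 ≤ n ∧ n ≤ N ∧ X n ω = o} :=
    fun _ _ hab _ ⟨n, h1, h2, h3⟩ => ⟨n, h1, h2.trans hab, h3⟩
  rw [hunion, hmono.measure_iUnion]
  exact iSup_le fun N => (measure_visit_le_pathMass hX N).trans (pathMass_return_le hq hh ho N)

end MarkovChain

theorem List.isChain_cons_append_singleton_iff {α : Type*} {R : α → α → Prop} {a b : α}
    {l : List α} : (a :: (l ++ [b])).IsChain R ↔ (a :: l).IsChain R ∧ R (l.getLastD a) b := by
  rw [← List.cons_append, List.isChain_append]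
  simp [List.getLast?_cons]

namespace Cover

variable {V : Type} {E : V → V → Prop} {i₀ : V}

instance [Countable V] : Countable (Cover V E i₀) := inferInstanceAs (Countable (Subtype _))

def parent (x : Cover V E i₀) : Cover V E i₀ :=
  ⟨x.val.dropLast, x.2.prefix ((List.prefix_cons_inj _).2 (List.dropLast_prefix _))⟩

def child (x : Cover V E i₀) (j : {j // E x.lbl j}) : Cover V E i₀ :=
  ⟨x.val ++ [j.1], List.isChain_cons_append_singleton_iff.2 ⟨x.2, j.2⟩⟩

@[simp] theorem lbl_child (x : Cover V E i₀) (j : {j // E x.lbl j}) : (x.child j).lbl = j :=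
  List.getLastD_concat

@[simp] theorem parent_child (x : Cover V E i₀) (j : {j // E x.lbl j}) : (x.child j).parent = x :=
  Subtype.ext List.dropLast_concat

@[simp] theorem parent_root : (root : Cover V E i₀).parent = root := rfl

theorem child_injective (x : Cover V E i₀) : Injective x.child := fun j j' h =>
  Subtype.ext (by simpa using congrArg lbl h)

theorem child_ne_parent (x : Cover V E i₀) (j : {j // E x.lbl j}) : x.child j ≠ x.parent := by
  intro h
  have := congrArg (fun y : Cover V E i₀ => y.val.length) h
  simp [child, parent] at this
  omega

theorem val_parent_append {x : Cover V E i₀} (hx : x ≠ root) :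
    x.parent.val ++ [x.lbl] = x.val := by
  obtain ⟨l, b, h⟩ := (List.eq_nil_or_concat x.val).resolve_left fun h => hx (Subtype.ext h)
  simp [parent, lbl, h]

theorem exists_child_parent_eq {x : Cover V E i₀} (hx : x ≠ root) :
    ∃ j, x.parent.child j = x := by
  have hval := val_parent_append hx
  exact ⟨⟨x.lbl, (List.isChain_cons_append_singleton_iff.1 (hval ▸ x.2)).2⟩, Subtype.ext hval⟩

theorem isChildOf_iff {x y : Cover V E i₀} : y.IsChildOf x ↔ y ∈ range x.child := by
  constructor
  · rintro ⟨j, hj⟩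
    have hE : E x.lbl j := (List.isChain_cons_append_singleton_iff.1 (hj ▸ y.2)).2
    exact ⟨⟨j, hE⟩, Subtype.ext hj.symm⟩
  · rintro ⟨j, rfl⟩
    exact ⟨j, rfl⟩

variable (pf : V → V → ℝ) (pm : V → ℝ)

theorem coverP_child (x : Cover V E i₀) (j : {j // E x.lbl j}) :
    coverP E i₀ pf pm x (x.child j) = pf x.lbl j := by
  rw [coverP, if_pos (isChildOf_iff.2 ⟨j, rfl⟩), lbl_child]

theorem coverP_parent (x : Cover V E i₀) : coverP E i₀ pf pm x x.parent = pm x.lbl := by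
  have hpc : ¬ x.parent.IsChildOf x := fun h => by
    obtain ⟨j, hj⟩ := isChildOf_iff.1 h
    exact x.child_ne_parent j hj
  rw [coverP, if_neg hpc]
  by_cases hx : x = root
  · subst hx
    rw [if_pos ⟨rfl, rfl⟩]
    rfl
  · rw [if_neg fun h => hx (Subtype.ext h.1), if_pos (isChildOf_iff.2 (exists_child_parent_eq hx))]

theorem coverP_eq_zero {x y : Cover V E i₀} (hp : y ≠ x.parent) (hc : y ∉ range x.child) :
    coverP E i₀ pf pm x y = 0 := by
  rw [coverP, if_neg (mt isChildOf_iff.1 hc)]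
  split_ifs with hroot hxy
  · exact absurd (Subtype.ext (by simp [parent, hroot.1, hroot.2])) hp
  · obtain ⟨j, rfl⟩ := isChildOf_iff.1 hxy
    exact absurd (parent_child y j).symm hp
  · rfl

theorem tsum_coverP_mul (x : Cover V E i₀) (u : Cover V E i₀ → ℝ≥0∞) :
    ∑' y, ENNReal.ofReal (coverP E i₀ pf pm x y) * u y =
      ENNReal.ofReal (pm x.lbl) * u x.parent +
        ∑' j : {j // E x.lbl j}, ENNReal.ofReal (pf x.lbl j) * u (x.child j) := by
  rw [ENNReal.tsum_eq_add_tsum_ite x.parent, coverP_parent]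
  congr 1
  rw [← x.child_injective.tsum_eq]
  · exact tsum_congr fun j => by rw [if_neg (x.child_ne_parent j), coverP_child]
  · intro y hy
    by_contra hc
    refine hy ?_
    dsimp only
    split_ifs with hp
    · rfl
    · rw [coverP_eq_zero pf pm hp hc, ENNReal.ofReal_zero, zero_mul]

theorem tsum_coverP (x : Cover V E i₀) :
    ∑' y, ENNReal.ofReal (coverP E i₀ pf pm x y) =
      ENNReal.ofReal (pm x.lbl) + ∑' j : {j // E x.lbl j}, ENNReal.ofReal (pf x.lbl j) := by
  simpa using tsum_coverP_mul pf pm x 1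

noncomputable def labelProd (G : V → ℝ≥0∞) (x : Cover V E i₀) : ℝ≥0∞ := (x.val.map G).prod

variable {pf pm} {G : V → ℝ≥0∞}

@[simp] theorem labelProd_root : labelProd G (root : Cover V E i₀) = 1 := rfl

@[simp] theorem labelProd_child (x : Cover V E i₀) (j : {j // E x.lbl j}) :
    labelProd G (x.child j) = labelProd G x * G j := by
  simp [labelProd, child]

theorem labelProd_eq_parent_mul {x : Cover V E i₀} (hx : x ≠ root) :
    labelProd G x = labelProd G x.parent * G x.lbl := by
  conv_lhs => rw [labelProd, ← val_parent_append hx]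
  simp [labelProd]

theorem tsum_coverP_root_mul_labelProd :
    ∑' y, ENNReal.ofReal (coverP E i₀ pf pm root y) * labelProd G y =
      ENNReal.ofReal (pm i₀) + ∑' j : {j // E i₀ j}, ENNReal.ofReal (pf i₀ j) * G j := by
  simp only [tsum_coverP_mul, parent_root, labelProd_root, labelProd_child, mul_one, one_mul]
  rfl

theorem tsum_coverP_mul_labelProd_le
    (hG : ∀ i, ENNReal.ofReal (pm i) +
      (∑' j : {j // E i j}, ENNReal.ofReal (pf i j) * G j) * G i ≤ G i)
    {x : Cover V E i₀} (hx : x ≠ root) :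
    ∑' y, ENNReal.ofReal (coverP E i₀ pf pm x y) * labelProd G y ≤ labelProd G x := by
  have hsplit := labelProd_eq_parent_mul (G := G) hx
  calc ∑' y, ENNReal.ofReal (coverP E i₀ pf pm x y) * labelProd G y
      = labelProd G x.parent * (ENNReal.ofReal (pm x.lbl) +
          (∑' j : {j // E x.lbl j}, ENNReal.ofReal (pf x.lbl j) * G j) * G x.lbl) := by
        simp only [tsum_coverP_mul, labelProd_child, hsplit]
        rw [mul_add, ← ENNReal.tsum_mul_right, ← ENNReal.tsum_mul_left]
        congr 1
        · ring
        · exact tsum_congr fun j => by ring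
    _ ≤ labelProd G x.parent * G x.lbl := by gcongr; exact hG x.lbl
    _ = labelProd G x := hsplit.symm

end Cover

section CoverWalk

variable {V : Type} {E : V → V → Prop} {pf : V → V → ℝ} {pm : V → ℝ}

theorem tsum_subtype_ofReal_mul {p : V → Prop} (hp : {j | p j}.Finite) {a b : V → ℝ}
    (ha : ∀ j, 0 ≤ a j) (hb : ∀ j, 0 ≤ b j) (hsupp : support a ⊆ {j | p j}) :
    ∑' j : {j // p j}, ENNReal.ofReal (a j) * ENNReal.ofReal (b j) =
      ENNReal.ofReal (∑' j, a j * b j) := by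
  have hab : support (fun j => a j * b j) ⊆ {j | p j} := (support_mul_subset_left _ _).trans hsupp
  simp_rw [← ENNReal.ofReal_mul (ha _)]
  rw [ENNReal.ofReal_tsum_of_nonneg (fun j => mul_nonneg (ha j) (hb j))
    (summable_of_hasFiniteSupport (hp.subset hab))]
  exact tsum_subtype_eq_of_support_subset (f := fun j => ENNReal.ofReal (a j * b j))
    (s := {j | p j}) fun j hj => hab fun h => hj (by simp [h])

theorem tsum_ofReal_coverP_le_one {i₀ : V} (hpm : ∀ i, 0 < pm i) (hpf0 : ∀ i j, 0 ≤ pf i j)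
    (hsupp : ∀ i, support (pf i) ⊆ {j | E i j}) (hout : ∀ i, {j | E i j}.Finite)
    (hpfsum : ∀ i, ∑' j, pf i j = 1 - pm i) (x : Cover V E i₀) :
    ∑' y, ENNReal.ofReal (coverP E i₀ pf pm x y) ≤ 1 := by
  have h := tsum_subtype_ofReal_mul (hout x.lbl) (hpf0 x.lbl) (fun _ => zero_le_one) (hsupp x.lbl)
  simp only [ENNReal.ofReal_one, mul_one] at h
  rw [Cover.tsum_coverP, h, ← ENNReal.ofReal_add (hpm _).le (tsum_nonneg (hpf0 x.lbl)), hpfsum]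
  simp

theorem exists_subinvariant_pos_of_one_lt_lambdaPlus {ε : ℝ} (hε0 : 0 < ε) (hε : ∀ i, ε < pm i)
    (hpf0 : ∀ i j, 0 ≤ pf i j) (hpos : ∀ i j, E i j → 0 < pf i j)
    (hsupp : ∀ i, support (pf i) ⊆ {j | E i j}) (hout : ∀ i, {j | E i j}.Finite)
    (hpfsum : ∀ i, ∑' j, pf i j = 1 - pm i) {i₀ : V} (hconn : ∀ j, Relation.ReflTransGen E i₀ j)
    (hlam : 1 < lambdaPlus fun i j => pf i j / pm i) :
    ∃ lam, 1 < lam ∧ ∃ g : V → ℝ, 0 ≤ g ∧ BddAbove (range g) ∧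
      (∀ i, pm i * (lam * g i) ≤ ∑' j, pf i j * g j) ∧ 0 < g i₀ := by
  set M : V → V → ℝ := fun i j => pf i j / pm i
  have hpm (i : V) : 0 < pm i := hε0.trans (hε i)
  have hM0 (i j : V) : 0 ≤ M i j := div_nonneg (hpf0 i j) (hpm i).le
  have hMfin (i : V) : (support (M i)).Finite :=
    ((hout i).subset (hsupp i)).subset fun j hj => (div_ne_zero_iff.1 hj).1
  have hrow (i : V) : ∑' j, M i j ≤ ε⁻¹ :=
    calc ∑' j, M i j = (1 - pm i) / pm i := by rw [tsum_div_const, hpfsum]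
      _ ≤ 1 / pm i := div_le_div_of_nonneg_right (by linarith [hpm i]) (hpm i).le
      _ ≤ ε⁻¹ := by rw [one_div]; exact inv_anti₀ hε0 (hε i).le
  have hMconn (j : V) : Relation.ReflTransGen (fun a b => 0 < M a b) i₀ j :=
    Relation.ReflTransGen.mono (fun a b hab => div_pos (hpos a b hab) (hpm a)) _ _ (hconn j)
  obtain ⟨lam, hlam1, f, hf0, hfne, hfb, hf⟩ := exists_subinvariant_of_one_lt_lambdaPlus hlam
  obtain ⟨g, hg0, hgb, hg, hgi₀⟩ := exists_subinvariant_pos_at hM0 hMfin hrow hMconn hf0 hfne hfb hf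
  refine ⟨lam, hlam1, g, hg0, hgb, fun i => ?_, hgi₀⟩
  calc pm i * (lam * g i) ≤ pm i * tsumMulVec M g i := mul_le_mul_of_nonneg_left (hg i) (hpm i).le
    _ = ∑' j, pf i j * g j := by
      rw [tsumMulVec, ← tsum_mul_left]
      exact tsum_congr fun j => by have := (hpm i).ne'; simp only [M]; field_simp

theorem exists_labelWeight (hpm : ∀ i, 0 < pm i) (hpf0 : ∀ i j, 0 ≤ pf i j)
    (hsupp : ∀ i, support (pf i) ⊆ {j | E i j}) (hout : ∀ i, {j | E i j}.Finite)
    (hpfsum : ∀ i, ∑' j, pf i j = 1 - pm i) {lam : ℝ} (hlam : 1 < lam) {g : V → ℝ}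
    (hg0 : 0 ≤ g) (hgb : BddAbove (range g)) (hg : ∀ i, pm i * (lam * g i) ≤ ∑' j, pf i j * g j)
    {i₀ : V} (hgi₀ : 0 < g i₀) :
    ∃ G : V → ℝ≥0∞,
      (∀ i, ENNReal.ofReal (pm i) + (∑' j : {j // E i j}, ENNReal.ofReal (pf i j) * G j) * G i ≤
        G i) ∧
      ENNReal.ofReal (pm i₀) + ∑' j : {j // E i₀ j}, ENNReal.ofReal (pf i₀ j) * G j < 1 := by
  obtain ⟨G, hG0, hG, hG₀⟩ :=
    exists_escapeWeight hpm (fun i => (hout i).subset (hsupp i)) hpfsum hlam hg0 hgb hg hgi₀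
  have hconv (i : V) := tsum_subtype_ofReal_mul (hout i) (hpf0 i) hG0 (hsupp i)
  have hT0 (i : V) : 0 ≤ ∑' j, pf i j * G j := tsum_nonneg fun j => mul_nonneg (hpf0 i j) (hG0 j)
  refine ⟨fun i => ENNReal.ofReal (G i), fun i => ?_, ?_⟩
  · rw [hconv, ← ENNReal.ofReal_mul (hT0 i),
      ← ENNReal.ofReal_add (hpm i).le (mul_nonneg (hT0 i) (hG0 i))]
    exact ENNReal.ofReal_le_ofReal (hG i)
  · rw [hconv, ← ENNReal.ofReal_add (hpm i₀).le (hT0 i₀), ENNReal.ofReal_lt_one]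
    exact hG₀

end CoverWalk

theorem transient_of_lambdaPlus_gt_one_general
    {V : Type} [Countable V] (E : V → V → Prop) (i₀ : V)
    (hconn : ∀ i j : V, Relation.ReflTransGen E i j)
    (hout : ∀ i : V, {j | E i j}.Finite)
    (pG : V → V → ℝ) (hpG0 : ∀ i j, 0 ≤ pG i j) (hpGpos : ∀ i j, 0 < pG i j ↔ E i j)
    (hpGsum : ∀ i, ∑' j : V, pG i j = 1)
    (pm : V → ℝ) (ε : ℝ) (hε0 : 0 < ε)
    (hpm : ∀ i, ε < pm i ∧ pm i < 1 - ε)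
    (hlam : lambdaPlus (fun i j => (1 - pm i) * pG i j / pm i) > 1) :
    ∀ (Ω : Type) (mΩ : MeasurableSpace Ω) (P : Measure Ω), IsProbabilityMeasure P →
      ∀ X : ℕ → Ω → Cover V E i₀,
        IsCoverWalk E i₀ (fun i j => (1 - pm i) * pG i j) pm P X →
        P {ω | ∃ n : ℕ, 1 ≤ n ∧ X n ω = Cover.root} < 1 := by
  intro Ω _ P _ X hX
  set pf : V → V → ℝ := fun i j => (1 - pm i) * pG i j
  have hpm0 (i : V) : 0 < pm i := hε0.trans (hpm i).1
  have hpm1 (i : V) : 0 < 1 - pm i := by linarith [(hpm i).2]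
  have hpf0 (i j : V) : 0 ≤ pf i j := mul_nonneg (hpm1 i).le (hpG0 i j)
  have hpf_pos (i j : V) (h : E i j) : 0 < pf i j := mul_pos (hpm1 i) ((hpGpos i j).2 h)
  have hsupp (i : V) : support (pf i) ⊆ {j | E i j} := fun j hj =>
    (hpGpos i j).1 ((hpG0 i j).lt_of_ne' (right_ne_zero_of_mul hj))
  have hpfsum (i : V) : ∑' j, pf i j = 1 - pm i := by rw [tsum_mul_left, hpGsum, mul_one]
  obtain ⟨lam, hlam1, g, hg0, hgb, hg, hgi₀⟩ := exists_subinvariant_pos_of_one_lt_lambdaPlus hε0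
    (fun i => (hpm i).1) hpf0 hpf_pos hsupp hout hpfsum (hconn i₀) hlam
  obtain ⟨G, hG, hG₀⟩ := exists_labelWeight hpm0 hpf0 hsupp hout hpfsum hlam1 hg0 hgb hg hgi₀
  calc P {ω | ∃ n, 1 ≤ n ∧ X n ω = Cover.root}
      ≤ ∑' y, ENNReal.ofReal (coverP E i₀ pf pm Cover.root y) * Cover.labelProd G y :=
        measure_exists_return_le (q := fun x y => ENNReal.ofReal (coverP E i₀ pf pm x y)) hX.2
          (tsum_ofReal_coverP_le_one hpm0 hpf0 hsupp hout hpfsum)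
          (fun _ hx => Cover.tsum_coverP_mul_labelProd_le hG hx) Cover.labelProd_root.ge
    _ = _ := Cover.tsum_coverP_root_mul_labelProd
    _ < 1 := hG₀

/-- **Theorem 2 (part).** If the upper Collatz–Wielandt number of the matrix
`M = (p(i,j)/p(-i))` satisfies `λ⁺(M) > 1`, then the nearest-neighbour random walk
on the directed cover `T` is transient (returns to the root with probability < 1). -/
theorem transient_of_lambdaPlus_gt_one
    {V : Type} [Countable V] (E : V → V → Prop) (i₀ : V)
    (hconn : ∀ i j : V, Relation.ReflTransGen E i j)
    (hout : ∀ i : V, {j | E i j}.Finite) (hin : ∀ i : V, {j | E j i}.Finite)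
    (D : ℕ) (hD : ∀ i : V, {j | E i j}.ncard ≤ D ∧ {j | E j i}.ncard ≤ D)
    (pG : V → V → ℝ) (hpG0 : ∀ i j, 0 ≤ pG i j) (hpGpos : ∀ i j, 0 < pG i j ↔ E i j)
    (hpGsum : ∀ i, ∑' j : V, pG i j = 1)
    (pm : V → ℝ) (ε : ℝ) (hε0 : 0 < ε) (hε1 : ε < 1)
    (hpm : ∀ i, ε < pm i ∧ pm i < 1 - ε)
    (hlam : lambdaPlus (fun i j => (1 - pm i) * pG i j / pm i) > 1) :
    ∀ (Ω : Type) (mΩ : MeasurableSpace Ω) (P : Measure Ω), IsProbabilityMeasure P →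
      ∀ X : ℕ → Ω → Cover V E i₀,
        IsCoverWalk E i₀ (fun i j => (1 - pm i) * pG i j) pm P X →
        P {ω | ∃ n : ℕ, 1 ≤ n ∧ X n ω = Cover.root} < 1 :=
  transient_of_lambdaPlus_gt_one_general E i₀ hconn hout pG hpG0 hpGpos hpGsum pm ε hε0 hpm hlam
end

section
/- Let A = (a(i,j))_{i,j∈ℕ₀} be the adjacency matrix of the half-line graph, i.e., a(i,j) = 1 if |i − j| = 1 and a(i,j) = 0 otherwise. Then λ⁺(A) = 2, but the supremum in the definition of λ⁺(A) is not attained: every nonzero function f : ℕ₀ → [0,∞) satisfying f(1) ≥ 2 f(0) and f(n+1) + f(n−1) ≥ 2 f(n) for all n ≥ 1 (i.e., Af ≥ 2f pointwise) is unbounded. -/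
open Filter Topology
open scoped Classical

/-- The adjacency matrix of the half-line `ℕ₀`: `a(i,j) = 1` iff `|i − j| = 1`. -/
noncomputable def halfLineA : ℕ → ℕ → ℝ := fun i j =>
  if i = j + 1 ∨ j = i + 1 then 1 else 0

/-!
A bounded nonnegative `f` with `Af ≥ 2f` is a bounded convex sequence, hence nonincreasing;
together with `f 1 ≥ 2 f 0 ≥ f 0` this forces `f = 0`, so `2` and every larger `λ` lie outside
the Collatz–Wielandt set. Conversely, for `λ ≤ 2 - 1/N` the bounded ramp `n ↦ min n N`
satisfies `Af ≥ λ f`: it is harmonic below the kink at `N`, loses only `1` there, and is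
constant afterwards. Hence the set is exactly `(0, 2)`.
-/

open Set

def collatzWielandtSet {V : Type} (M : V → V → ℝ) : Set ℝ :=
  {lam : ℝ | 0 < lam ∧ ∃ f : V → ℝ, (∀ i, 0 ≤ f i) ∧ f ≠ 0 ∧
    BddAbove (Set.range f) ∧ ∀ i, lam * f i ≤ ∑' j : V, M i j * f j}

section ConvexSequence

variable {α : Type*} [Field α] [LinearOrder α] [IsStrictOrderedRing α] {f : ℕ → α}

lemma add_mul_sub_le_of_monotone_sub (hf : Monotone fun n => f (n + 1) - f n) (m k : ℕ) :
    f m + k * (f (m + 1) - f m) ≤ f (m + k) := by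
  induction k with
  | zero => simp
  | succ k ih =>
    have hstep : f (m + 1) - f m ≤ f (m + k + 1) - f (m + k) := hf (Nat.le_add_right m k)
    push_cast
    rw [← add_assoc]
    linarith

variable [Archimedean α]

lemma not_bddAbove_range_of_monotone_sub (hf : Monotone fun n => f (n + 1) - f n) {m : ℕ}
    (hm : f m < f (m + 1)) : ¬ BddAbove (range f) := by
  rintro ⟨c, hc⟩
  obtain ⟨k, hk⟩ := exists_nat_gt ((c - f m) / (f (m + 1) - f m))
  rw [div_lt_iff₀ (sub_pos.2 hm)] at hk
  linarith [add_mul_sub_le_of_monotone_sub hf m k, hc (mem_range_self (m + k))]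

lemma antitone_of_bddAbove_of_monotone_sub (hf : Monotone fun n => f (n + 1) - f n)
    (hb : BddAbove (range f)) : Antitone f :=
  antitone_nat_of_succ_le fun _ =>
    not_lt.1 fun hm => not_bddAbove_range_of_monotone_sub hf hm hb

end ConvexSequence

lemma eq_zero_of_bddAbove_of_two_mul_le {f : ℕ → ℝ} (hf : ∀ n, 0 ≤ f n)
    (h0 : 2 * f 0 ≤ f 1) (h : ∀ n, 2 * f (n + 1) ≤ f (n + 2) + f n)
    (hb : BddAbove (range f)) : f = 0 := by
  have hconvex : Monotone fun n => f (n + 1) - f n :=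
    monotone_nat_of_le_succ fun n => by linarith [h n]
  have hanti := antitone_of_bddAbove_of_monotone_sub hconvex hb
  have hf0 : f 0 ≤ 0 := by linarith [hanti (Nat.zero_le 1)]
  funext n
  exact le_antisymm ((hanti n.zero_le).trans hf0) (hf n)

lemma tsum_halfLineA_zero_mul (f : ℕ → ℝ) : ∑' j, halfLineA 0 j * f j = f 1 := by
  rw [tsum_eq_single 1 fun j hj => by simp [halfLineA]; omega]
  simp [halfLineA]

lemma tsum_halfLineA_succ_mul (f : ℕ → ℝ) (n : ℕ) :
    ∑' j, halfLineA (n + 1) j * f j = f (n + 2) + f n := by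
  rw [tsum_eq_sum (s := {n + 2, n}) fun j hj => by simp [halfLineA] at hj ⊢; omega,
    Finset.sum_pair (by omega)]
  simp [halfLineA]

lemma forall_mul_le_tsum_halfLineA_iff (c : ℝ) (f : ℕ → ℝ) :
    (∀ i, c * f i ≤ ∑' j, halfLineA i j * f j) ↔
      c * f 0 ≤ f 1 ∧ ∀ n, c * f (n + 1) ≤ f (n + 2) + f n := by
  constructor
  · intro h
    exact ⟨by simpa only [tsum_halfLineA_zero_mul] using h 0,
      fun n => by simpa only [tsum_halfLineA_succ_mul] using h (n + 1)⟩
  · rintro ⟨h0, h⟩ (_ | n)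
    · simpa only [tsum_halfLineA_zero_mul] using h0
    · simpa only [tsum_halfLineA_succ_mul] using h n

lemma lt_two_of_mem_collatzWielandtSet_halfLineA {lam : ℝ}
    (hlam : lam ∈ collatzWielandtSet halfLineA) : lam < 2 := by
  obtain ⟨-, f, hf, hne, hb, hAf⟩ := hlam
  by_contra! h2
  have hA2f : ∀ i, 2 * f i ≤ ∑' j, halfLineA i j * f j :=
    fun i => (mul_le_mul_of_nonneg_right h2 (hf i)).trans (hAf i)
  obtain ⟨h0, h⟩ := (forall_mul_le_tsum_halfLineA_iff 2 f).1 hA2f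
  exact hne (eq_zero_of_bddAbove_of_two_mul_le hf h0 h hb)

lemma mul_min_le_min_add_min {lam : ℝ} {N : ℕ} (h2 : lam ≤ 2) (hN : lam * N ≤ 2 * N - 1)
    (n : ℕ) : lam * (min (n + 1) N : ℕ) ≤ (min (n + 2) N : ℕ) + (min n N : ℕ) := by
  have hcases : (min (n + 2) N + min n N = 2 * min (n + 1) N) ∨
      (min (n + 1) N = N ∧ min (n + 2) N + min n N + 1 = 2 * N) := by omega
  rcases hcases with hharmonic | ⟨hkink, hloss⟩
  · rw [← Nat.cast_add, hharmonic, Nat.cast_mul, Nat.cast_ofNat]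
    exact mul_le_mul_of_nonneg_right h2 (Nat.cast_nonneg _)
  · have hloss' : ((min (n + 2) N : ℕ) : ℝ) + (min n N : ℕ) + 1 = 2 * N := by
      exact_mod_cast hloss
    rw [hkink]
    linarith

lemma mem_collatzWielandtSet_halfLineA {lam : ℝ} (h0 : 0 < lam) (h2 : lam < 2) :
    lam ∈ collatzWielandtSet halfLineA := by
  obtain ⟨N, hN⟩ := exists_nat_one_div_lt (sub_pos.2 h2)
  have hlamN : lam * (N + 1 : ℕ) ≤ 2 * (N + 1 : ℕ) - 1 := by
    rw [div_lt_iff₀ (by positivity)] at hN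
    push_cast
    linarith
  refine ⟨h0, fun n => (min n (N + 1) : ℕ), fun _ => Nat.cast_nonneg _, fun h => ?_,
    ⟨((N + 1 : ℕ) : ℝ), ?_⟩, (forall_mul_le_tsum_halfLineA_iff lam _).2 ⟨by simp, ?_⟩⟩
  · simpa using congrFun h 1
  · rintro _ ⟨n, rfl⟩
    exact Nat.cast_le.2 (min_le_right _ _)
  · exact mul_min_le_min_add_min h2.le hlamN

lemma collatzWielandtSet_halfLineA : collatzWielandtSet halfLineA = Ioo 0 2 :=
  Set.ext fun _ => ⟨fun h => ⟨h.1, lt_two_of_mem_collatzWielandtSet_halfLineA h⟩,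
    fun h => mem_collatzWielandtSet_halfLineA h.1 h.2⟩

/-- **Remark (non-attained supremum).** For the adjacency matrix `A` of the half line
`ℕ₀` one has `λ⁺(A) = 2`, but the supremum in the definition of `λ⁺(A)` is not attained:
every nonzero `f : ℕ₀ → [0, ∞)` with `f(1) ≥ 2 f(0)` and `f(n+1) + f(n−1) ≥ 2 f(n)` for
all `n ≥ 1` (i.e. `Af ≥ 2f` pointwise) is unbounded. -/
theorem halfLine_lambdaPlus_eq_two_not_attained :
    lambdaPlus halfLineA = 2 ∧
    ∀ f : ℕ → ℝ, (∀ n, 0 ≤ f n) → f ≠ 0 → 2 * f 0 ≤ f 1 →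
      (∀ n : ℕ, 1 ≤ n → 2 * f n ≤ f (n + 1) + f (n - 1)) →
      ¬ BddAbove (Set.range f) := by
  refine ⟨?_, fun f hf hne h0 h hb =>
    hne (eq_zero_of_bddAbove_of_two_mul_le hf h0 (fun n => ?_) hb)⟩
  · show sSup (collatzWielandtSet halfLineA) = 2
    rw [collatzWielandtSet_halfLineA, csSup_Ioo two_pos]
  · simpa using h (n + 1) n.succ_pos
end
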